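/- Let s ≥ 2, aₘ = 1 + 1/2 + ... + 1/m, Sₘ = {x ∈ ℝˢ : |x| = aₘ}, and φ the function defined by: φ(x,y) = 0 if y = (a_q/a_p)x for some p, q ∈ ℕ; φ(x,y) = (1/aₘ)|x−y| if x, y ∈ Sₘ for some m; and φ(x,y) = |x−y| otherwise. Then the metric space (ℝˢ, d^φ) with base point O = 0 is totally bounded. -/

import Mathlib

noncomputable def deltaPhi {X : Type*} [MetricSpace X] (m : X) (φ : X → X → ℝ) (x y : X) : ℝ :=
  min (dist x y) (1 / (1 + dist m x) + φ x y + 1 / (1 + dist m y))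

noncomputable def dPhi {X : Type*} [MetricSpace X] (m : X) (φ : X → X → ℝ) (x y : X) : ℝ :=
  sInf { r : ℝ | ∃ (n : ℕ) (f : ℕ → X), 1 ≤ n ∧ f 0 = x ∧ f n = y ∧
    r = ∑ i ∈ Finset.range n, deltaPhi m φ (f i) (f (i + 1)) }

/-- aₘ = 1 + 1/2 + ⋯ + 1/m. -/
noncomputable def harm (m : ℕ) : ℝ := ∑ k ∈ Finset.range m, (1 : ℝ) / (k + 1)

-- The function φ for the standard compactification of ℝˢ:
-- φ(x,y) = 0 if y = (a_q/a_p) x for some p,q ≥ 1; φ(x,y) = (1/aₘ)|x−y| if x,y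
-- lie on the sphere Sₘ of radius aₘ (note ‖x‖ = aₘ there); |x−y| otherwise.
open Classical in
noncomputable def phiStd (s : ℕ) (x y : EuclideanSpace ℝ (Fin s)) : ℝ :=
  if ∃ p q : ℕ, 1 ≤ p ∧ 1 ≤ q ∧ y = (harm q / harm p) • x then 0
  else if ∃ m : ℕ, 1 ≤ m ∧ ‖x‖ = harm m ∧ ‖y‖ = harm m then (1 / ‖x‖) * ‖x - y‖
  else ‖x - y‖

/-!
Fix `M` with `a_M` large. A point of norm at most `a_M` is approximated by a Euclidean net of
the ball of radius `a_M`, since `d^φ ≤ d_E`. A point `x` farther out lies within `1/(p+1)` of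
the sphere `S_p` with `a_p ≤ |x| < a_{p+1}`; from there the dilation by `a_M / a_p` onto `S_M`
costs `φ = 0`, so a chain of two `δ^φ`-steps of total length `O(1/(1 + a_M))` brings `x` into
that same ball.
-/

section Chains

variable {X : Type*} [MetricSpace X] (m : X) {φ : X → X → ℝ}

theorem deltaPhi_le_dist (φ : X → X → ℝ) (x y : X) : deltaPhi m φ x y ≤ dist x y :=
  min_le_left _ _

theorem deltaPhi_nonneg (hφ : ∀ x y, 0 ≤ φ x y) (x y : X) : 0 ≤ deltaPhi m φ x y :=
  le_min dist_nonneg (by have := hφ x y; positivity)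

theorem dPhi_le_sum (hφ : ∀ x y, 0 ≤ φ x y) {n : ℕ} (hn : 1 ≤ n) (f : ℕ → X) :
    dPhi m φ (f 0) (f n) ≤ ∑ i ∈ Finset.range n, deltaPhi m φ (f i) (f (i + 1)) := by
  refine csInf_le ⟨0, ?_⟩ ⟨n, f, hn, rfl, rfl, rfl⟩
  rintro r ⟨k, g, -, -, -, rfl⟩
  exact Finset.sum_nonneg fun i _ => deltaPhi_nonneg m hφ _ _

theorem dPhi_le_deltaPhi (hφ : ∀ x y, 0 ≤ φ x y) (x y : X) :
    dPhi m φ x y ≤ deltaPhi m φ x y := by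
  simpa using dPhi_le_sum m hφ le_rfl fun i => if i = 0 then x else y

theorem dPhi_le_dist (hφ : ∀ x y, 0 ≤ φ x y) (x y : X) : dPhi m φ x y ≤ dist x y :=
  (dPhi_le_deltaPhi m hφ x y).trans (deltaPhi_le_dist m φ x y)

theorem dPhi_le_deltaPhi_add (hφ : ∀ x y, 0 ≤ φ x y) (x y z : X) :
    dPhi m φ x z ≤ deltaPhi m φ x y + dPhi m φ y z := by
  rw [← sub_le_iff_le_add']
  refine le_csInf ⟨_, 1, fun i => if i = 0 then y else z, le_rfl, rfl, rfl, rfl⟩ ?_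
  rintro r ⟨n, f, hn, rfl, rfl, rfl⟩
  rw [sub_le_iff_le_add']
  let g : ℕ → X := fun i => if i = 0 then x else f (i - 1)
  calc dPhi m φ x (f n) = dPhi m φ (g 0) (g (n + 1)) := rfl
    _ ≤ ∑ i ∈ Finset.range (n + 1), deltaPhi m φ (g i) (g (i + 1)) :=
        dPhi_le_sum m hφ (by omega) g
    _ = deltaPhi m φ x (f 0) + ∑ i ∈ Finset.range n, deltaPhi m φ (f i) (f (i + 1)) := by
        rw [Finset.sum_range_succ', add_comm]
        simp [g]

end Chains

section Harmonic

theorem harm_succ (m : ℕ) : harm (m + 1) = harm m + 1 / (m + 1) := by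
  simp [harm, Finset.sum_range_succ]

theorem harm_mono : Monotone harm := fun _ _ hab =>
  Finset.sum_le_sum_of_subset_of_nonneg (Finset.range_subset_range.2 hab)
    fun _ _ _ => by positivity

theorem one_le_harm {m : ℕ} (hm : 1 ≤ m) : 1 ≤ harm m := by
  simpa [harm] using harm_mono hm

theorem harm_le_self (m : ℕ) : harm m ≤ m := by
  simpa [harm] using
    Finset.sum_le_card_nsmul (Finset.range m) (fun k : ℕ => 1 / ((k : ℝ) + 1)) 1
    fun k _ => div_le_one_of_le₀ (by linarith [k.cast_nonneg (α := ℝ)]) (by positivity)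

theorem tendsto_harm_atTop : Filter.Tendsto harm Filter.atTop Filter.atTop :=
  Real.tendsto_sum_range_one_div_nat_succ_atTop

theorem exists_harm_le_lt_harm_succ {M : ℕ} {r : ℝ} (hr : harm M ≤ r) :
    ∃ p, M ≤ p ∧ harm p ≤ r ∧ r < harm (p + 1) := by
  by_contra! h
  have hle : ∀ k, harm (M + k) ≤ r := fun k => by
    induction k with
    | zero => exact hr
    | succ k ih => exact h (M + k) (by omega) ih
  obtain ⟨n, hn⟩ := (tendsto_harm_atTop.eventually_gt_atTop r).exists_forall_of_atTop
  have := hn (M + n) (by omega)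
  linarith [hle n]

end Harmonic

section Radial

variable {E : Type*} [NormedAddCommGroup E] [NormedSpace ℝ E]

theorem norm_div_norm_smul {x : E} (hx : x ≠ 0) {a : ℝ} (ha : 0 ≤ a) :
    ‖(a / ‖x‖) • x‖ = a := by
  rw [norm_smul, Real.norm_of_nonneg (by positivity), div_mul_cancel₀ _ (norm_ne_zero_iff.2 hx)]

theorem norm_sub_div_norm_smul {x : E} {a : ℝ} (ha : 0 < a) (hax : a ≤ ‖x‖) :
    ‖x - (a / ‖x‖) • x‖ = ‖x‖ - a := by
  have hx : 0 < ‖x‖ := ha.trans_le hax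
  have hle : a / ‖x‖ ≤ 1 := div_le_one_of_le₀ hax hx.le
  rw [show x - (a / ‖x‖) • x = (1 - a / ‖x‖) • x by rw [sub_smul, one_smul], norm_smul,
    Real.norm_of_nonneg (sub_nonneg.2 hle), sub_mul, one_mul, div_mul_cancel₀ _ hx.ne']

end Radial

section Standard

variable {s : ℕ}

theorem phiStd_nonneg (x y : EuclideanSpace ℝ (Fin s)) : 0 ≤ phiStd s x y := by
  unfold phiStd
  split_ifs <;> positivity

theorem phiStd_harm_div_smul {p q : ℕ} (hp : 1 ≤ p) (hq : 1 ≤ q)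
    (x : EuclideanSpace ℝ (Fin s)) :
    phiStd s x ((harm q / harm p) • x) = 0 :=
  if_pos ⟨p, q, hp, hq, rfl⟩

theorem exists_norm_le_harm_dPhi_le {M : ℕ} (hM : 1 ≤ M) (x : EuclideanSpace ℝ (Fin s)) :
    ∃ x' : EuclideanSpace ℝ (Fin s), ‖x'‖ ≤ harm M ∧
      ∀ y, dPhi 0 (phiStd s) x y ≤ 3 / (1 + harm M) + dist x' y := by
  have hM' : 1 ≤ harm M := one_le_harm hM
  have h3 : 3 / (1 + harm M) = 3 * (1 / (1 + harm M)) := by ring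
  set c := 1 / (1 + harm M)
  have hc : 0 ≤ c := by rw [one_div_nonneg]; linarith
  rw [h3]
  rcases le_or_gt ‖x‖ (harm M) with hx | hx
  · exact ⟨x, hx, fun y => by linarith [dPhi_le_dist 0 phiStd_nonneg x y]⟩
  obtain ⟨p, hMp, hpx, hxp⟩ := exists_harm_le_lt_harm_succ hx.le
  have hp : 1 ≤ harm p := one_le_harm (hM.trans hMp)
  have hx0 : x ≠ 0 := norm_pos_iff.1 (by linarith)
  set z := (harm p / ‖x‖) • x
  have hz : ‖z‖ = harm p := norm_div_norm_smul hx0 (by linarith)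
  set x' := (harm M / harm p) • z
  have hx' : ‖x'‖ = harm M := by
    rw [norm_smul, hz, Real.norm_of_nonneg (div_nonneg (by linarith) (by linarith)),
      div_mul_cancel₀ _ (by linarith)]
  refine ⟨x', hx'.le, fun y => ?_⟩
  have hxz : deltaPhi 0 (phiStd s) x z ≤ c := by
    refine (deltaPhi_le_dist _ _ x z).trans ?_
    rw [dist_eq_norm, norm_sub_div_norm_smul (by linarith) hpx]
    have hMp' : (M : ℝ) ≤ p := by exact_mod_cast hMp
    calc ‖x‖ - harm p ≤ 1 / (p + 1) := by linarith [harm_succ p]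
      _ ≤ c := one_div_le_one_div_of_le (by linarith) (by linarith [harm_le_self M])
  have hzx' : deltaPhi 0 (phiStd s) z x' ≤ 2 * c := by
    refine (min_le_right _ _).trans ?_
    rw [phiStd_harm_div_smul (hM.trans hMp) hM, dist_zero_left, dist_zero_left, hz, hx']
    have : 1 / (1 + harm p) ≤ c :=
      one_div_le_one_div_of_le (by linarith) (by linarith [harm_mono hMp])
    linarith
  linarith [dPhi_le_deltaPhi_add 0 phiStd_nonneg x z y, dPhi_le_deltaPhi_add 0 phiStd_nonneg z x' y,
    dPhi_le_dist 0 phiStd_nonneg x' y]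

end Standard

theorem stmt10_general (s : ℕ) :
    ∀ ε > (0 : ℝ), ∃ t : Finset (EuclideanSpace ℝ (Fin s)),
      ∀ x : EuclideanSpace ℝ (Fin s), ∃ y ∈ t,
        dPhi (0 : EuclideanSpace ℝ (Fin s)) (phiStd s) x y < ε := by
  intro ε hε
  obtain ⟨M, hM, hMε⟩ : ∃ M, 1 ≤ M ∧ 6 / ε < harm M :=
    ((Filter.eventually_ge_atTop 1).and (tendsto_harm_atTop.eventually_gt_atTop _)).exists
  have hsmall : 3 / (1 + harm M) < ε / 2 := by
    rw [div_lt_iff₀ hε] at hMε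
    rw [div_lt_iff₀ (by linarith [one_le_harm hM])]
    linarith
  obtain ⟨t, -, hcover⟩ := (isCompact_closedBall (0 : EuclideanSpace ℝ (Fin s)) (harm M)
    ).elim_nhds_subcover _ fun y _ => Metric.ball_mem_nhds y (half_pos hε)
  refine ⟨t, fun x => ?_⟩
  obtain ⟨x', hx', hdx⟩ := exists_norm_le_harm_dPhi_le hM x
  obtain ⟨y, hy, hx'y⟩ := Set.mem_iUnion₂.1 (hcover (mem_closedBall_zero_iff.2 hx'))
  exact ⟨y, hy, by linarith [hdx y, Metric.mem_ball.1 hx'y]⟩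

/-- (ℝˢ, d^φ) with base point the origin is totally bounded. -/
theorem stmt10 (s : ℕ) (hs : 2 ≤ s) :
    ∀ ε > (0 : ℝ), ∃ t : Finset (EuclideanSpace ℝ (Fin s)),
      ∀ x : EuclideanSpace ℝ (Fin s), ∃ y ∈ t,
        dPhi (0 : EuclideanSpace ℝ (Fin s)) (phiStd s) x y < ε :=
  stmt10_general s
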